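/- If a measure μ on X has Jacobian e^φ with respect to f (i.e., μ(fE) = ∫_E e^φ dμ for all measurable E), then for any wandering set W (the sets f^n W, n ∈ ℤ, pairwise disjoint), the sum Σ_{n∈ℤ} e^{φ_n(x)} is finite for μ-almost every x ∈ W; indeed ∫_W Σ_{n∈ℤ} e^{φ_n(x)} dμ(x) = μ(⋃_{n∈ℤ} f^n W) ≤ 1. -/
import Mathlib


open Filter Topology MeasureTheory

variable {X : Type*} [MetricSpace X]

noncomputable def cocycle (f : X ≃ₜ X) (φ : X → ℝ) : ℤ → X → ℝ
  | Int.ofNat n, x => ∑ i ∈ Finset.range n, φ ((⇑f)^[i] x)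
  | Int.negSucc n, x => -∑ i ∈ Finset.range (n + 1), φ ((⇑f.symm)^[i + 1] x)

def zpowIter (f : X ≃ₜ X) (k : ℤ) (x : X) : X :=
  if 0 ≤ k then (⇑f)^[k.toNat] x else (⇑f.symm)^[(-k).toNat] x

def peakSet (f : X ≃ₜ X) (φ : X → ℝ) (x : X) : Set ℤ :=
  {n : ℤ | ∀ m : ℤ, cocycle f φ m x ≤ cocycle f φ n x}

def finitePeaks (f : X ≃ₜ X) (φ : X → ℝ) (x : X) : Prop :=
  (peakSet f φ x).Nonempty ∧ (peakSet f φ x).Finite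

noncomputable def lastPeak (f : X ≃ₜ X) (φ : X → ℝ) (x : X) : ℤ :=
  sSup (peakSet f φ x)

noncomputable def peakPos (f : X ≃ₜ X) (φ : X → ℝ) (x : X) : X :=
  zpowIter f (lastPeak f φ x) x

lemma cocycle_ofNat_def (f : X ≃ₜ X) (φ : X → ℝ) (n : ℕ) :
    cocycle f φ (Int.ofNat n) = fun x => ∑ i ∈ Finset.range n, φ ((⇑f)^[i] x) := rfl

lemma cocycle_negSucc_def (f : X ≃ₜ X) (φ : X → ℝ) (n : ℕ) :
    cocycle f φ (Int.negSucc n)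
      = fun x => -∑ i ∈ Finset.range (n + 1), φ ((⇑f.symm)^[i + 1] x) := rfl

lemma hLI (f : X ≃ₜ X) : Function.LeftInverse ⇑f.symm ⇑f := f.symm_apply_apply

lemma hRI (f : X ≃ₜ X) : Function.RightInverse ⇑f.symm ⇑f := f.apply_symm_apply

lemma himg (f : X ≃ₜ X) (s : Set X) : ⇑f '' s = ⇑f.symm ⁻¹' s :=
  congrFun (Set.image_eq_preimage_of_inverse (hLI f) (hRI f)) s

lemma hsymmimg (f : X ≃ₜ X) (s : Set X) : ⇑f.symm '' s = ⇑f ⁻¹' s :=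
  congrFun (Set.image_eq_preimage_of_inverse (hRI f) (hLI f)) s

lemma iter_himg (f : X ≃ₜ X) (k : ℕ) (s : Set X) :
    (⇑f)^[k] '' s = (⇑f.symm)^[k] ⁻¹' s :=
  congrFun (Set.image_eq_preimage_of_inverse ((hLI f).iterate k) ((hRI f).iterate k)) s

lemma iter_hsymmimg (f : X ≃ₜ X) (k : ℕ) (s : Set X) :
    (⇑f.symm)^[k] '' s = (⇑f)^[k] ⁻¹' s :=
  congrFun (Set.image_eq_preimage_of_inverse ((hRI f).iterate k) ((hLI f).iterate k)) s

lemma cocycle_measurable [MeasurableSpace X] [OpensMeasurableSpace X]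
    (f : X ≃ₜ X) (φ : X → ℝ) (hφ : Continuous φ) (n : ℤ) :
    Measurable (cocycle f φ n) := by
  cases n with
  | ofNat n =>
      rw [cocycle_ofNat_def]
      exact Finset.measurable_sum _ fun i _ =>
        (hφ.comp (f.continuous.iterate i)).measurable
  | negSucc n =>
      rw [cocycle_negSucc_def]
      exact (Finset.measurable_sum _ fun i _ =>
        (hφ.comp (f.symm.continuous.iterate (i + 1))).measurable).neg

lemma iter_image_meas [MeasurableSpace X] [BorelSpace X]
    (f : X ≃ₜ X) (k : ℕ) {E : Set X} (hE : MeasurableSet E) :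
    MeasurableSet ((⇑f)^[k] '' E) := by
  rw [iter_himg]
  exact hE.preimage (f.symm.continuous.iterate k).measurable

lemma symm_iter_image_meas [MeasurableSpace X] [BorelSpace X]
    (f : X ≃ₜ X) (k : ℕ) {E : Set X} (hE : MeasurableSet E) :
    MeasurableSet ((⇑f.symm)^[k] '' E) := by
  rw [iter_hsymmimg]
  exact hE.preimage (f.continuous.iterate k).measurable

lemma zpowIter_ofNat (f : X ≃ₜ X) (k : ℕ) : zpowIter f (Int.ofNat k) = (⇑f)^[k] := by
  funext x; simp [zpowIter]

lemma zpowIter_negSucc (f : X ≃ₜ X) (k : ℕ) :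
    zpowIter f (Int.negSucc k) = (⇑f.symm)^[k + 1] := by
  funext x
  simp only [zpowIter]
  rw [if_neg (Int.negSucc_lt_zero k).not_ge]
  rfl

section Aux

variable [MeasurableSpace X] [BorelSpace X]
    (f : X ≃ₜ X) (φ : X → ℝ) (hφ : Continuous φ)
    (μ : MeasureTheory.Measure X)
    (hJ : ∀ E : Set X, MeasurableSet E →
      μ (⇑f '' E) = ∫⁻ x in E, ENNReal.ofReal (Real.exp (φ x)) ∂μ)

include hJ

lemma map_symm_eq :
    μ.map f.symm = μ.withDensity (fun x => ENNReal.ofReal (Real.exp (φ x))) := by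
  ext s hs
  rw [MeasureTheory.Measure.map_apply f.symm.continuous.measurable hs,
    MeasureTheory.withDensity_apply _ hs, ← hJ s hs, himg f s]

include hφ

lemma lintegral_comp_symm (g : X → ENNReal) (hg : Measurable g) :
    ∫⁻ x, g (f.symm x) ∂μ = ∫⁻ x, g x * ENNReal.ofReal (Real.exp (φ x)) ∂μ := by
  have hw : Measurable fun x => ENNReal.ofReal (Real.exp (φ x)) :=
    (Real.measurable_exp.comp hφ.measurable).ennreal_ofReal
  rw [← MeasureTheory.lintegral_map hg f.symm.continuous.measurable, map_symm_eq f φ μ hJ,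
    MeasureTheory.lintegral_withDensity_eq_lintegral_mul μ hw hg]
  simp [mul_comm]

lemma lintegral_comp_self (g : X → ENNReal) (hg : Measurable g) :
    ∫⁻ x, g (f x) ∂μ = ∫⁻ x, g x * ENNReal.ofReal (Real.exp (-φ (f.symm x))) ∂μ := by
  have h := lintegral_comp_symm f φ hφ μ hJ
    (fun x => g (f x) * ENNReal.ofReal (Real.exp (-φ x)))
    ((hg.comp f.continuous.measurable).mul
      ((Real.measurable_exp.comp hφ.neg.measurable).ennreal_ofReal))
  simp only [Homeomorph.apply_symm_apply] at h
  rw [h]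
  congr 1
  funext x
  rw [mul_assoc, ← ENNReal.ofReal_mul (Real.exp_nonneg _), ← Real.exp_add]
  simp

lemma cov_image (g : X → ENNReal) (hg : Measurable g) {E : Set X} (hE : MeasurableSet E) :
    ∫⁻ x in ⇑f '' E, g x ∂μ = ∫⁻ x in E, g (f x) * ENNReal.ofReal (Real.exp (φ x)) ∂μ := by
  have him : MeasurableSet (⇑f '' E) := iter_image_meas f 1 hE
  rw [← MeasureTheory.lintegral_indicator him, ← MeasureTheory.lintegral_indicator hE]
  have key : ∀ x, (⇑f '' E).indicator g x = E.indicator (fun y => g (f y)) (f.symm x) := by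
    intro x
    by_cases hx : x ∈ ⇑f '' E
    · have hx' : f.symm x ∈ E := by rw [himg f E] at hx; exact hx
      rw [Set.indicator_of_mem hx, Set.indicator_of_mem hx']
      simp
    · have hx' : f.symm x ∉ E := by rw [himg f E] at hx; exact hx
      rw [Set.indicator_of_notMem hx, Set.indicator_of_notMem hx']
  simp only [key]
  rw [lintegral_comp_symm f φ hφ μ hJ (E.indicator fun y => g (f y))
    ((hg.comp f.continuous.measurable).indicator hE)]
  congr 1
  funext x
  by_cases hx : x ∈ E
  · rw [Set.indicator_of_mem hx, Set.indicator_of_mem hx]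
  · rw [Set.indicator_of_notMem hx, Set.indicator_of_notMem hx, zero_mul]

lemma cov_image_symm (g : X → ENNReal) (hg : Measurable g) {E : Set X}
    (hE : MeasurableSet E) :
    ∫⁻ x in ⇑f.symm '' E, g x ∂μ =
      ∫⁻ x in E, g (f.symm x) * ENNReal.ofReal (Real.exp (-φ (f.symm x))) ∂μ := by
  have him : MeasurableSet (⇑f.symm '' E) := symm_iter_image_meas f 1 hE
  rw [← MeasureTheory.lintegral_indicator him, ← MeasureTheory.lintegral_indicator hE]
  have key : ∀ x, (⇑f.symm '' E).indicator g x =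
      E.indicator (fun y => g (f.symm y)) (f x) := by
    intro x
    by_cases hx : x ∈ ⇑f.symm '' E
    · have hx' : f x ∈ E := by rw [hsymmimg f E] at hx; exact hx
      rw [Set.indicator_of_mem hx, Set.indicator_of_mem hx']
      simp
    · have hx' : f x ∉ E := by rw [hsymmimg f E] at hx; exact hx
      rw [Set.indicator_of_notMem hx, Set.indicator_of_notMem hx']
  simp only [key]
  rw [lintegral_comp_self f φ hφ μ hJ (E.indicator fun y => g (f.symm y))
    ((hg.comp f.symm.continuous.measurable).indicator hE)]
  congr 1
  funext x
  by_cases hx : x ∈ E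
  · rw [Set.indicator_of_mem hx, Set.indicator_of_mem hx]
  · rw [Set.indicator_of_notMem hx, Set.indicator_of_notMem hx, zero_mul]

lemma jac_pos (k : ℕ) {E : Set X} (hE : MeasurableSet E) :
    μ ((⇑f)^[k] '' E) =
      ∫⁻ x in E, ENNReal.ofReal (Real.exp (cocycle f φ (Int.ofNat k) x)) ∂μ := by
  induction k generalizing E hE with
  | zero =>
      simp only [cocycle_ofNat_def, Finset.range_zero, Finset.sum_empty, Real.exp_zero,
        ENNReal.ofReal_one, Function.iterate_zero, Set.image_id]
      exact (MeasureTheory.setLIntegral_one E).symm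
  | succ k ih =>
      have hE' : MeasurableSet (⇑f '' E) := iter_image_meas f 1 hE
      rw [Function.iterate_succ, Set.image_comp, ih hE',
        cov_image f φ hφ μ hJ
          (fun x => ENNReal.ofReal (Real.exp (cocycle f φ (Int.ofNat k) x)))
          ((Real.measurable_exp.comp (cocycle_measurable f φ hφ _)).ennreal_ofReal) hE]
      congr 1
      funext x
      rw [← ENNReal.ofReal_mul (Real.exp_nonneg _), ← Real.exp_add]
      congr 2
      simp only [cocycle_ofNat_def]
      rw [Finset.sum_range_succ' (fun i => φ ((⇑f)^[i] x)) k]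
      simp [Function.iterate_succ_apply]

lemma jac_neg (k : ℕ) {E : Set X} (hE : MeasurableSet E) :
    μ ((⇑f.symm)^[k + 1] '' E) =
      ∫⁻ x in E, ENNReal.ofReal (Real.exp (cocycle f φ (Int.negSucc k) x)) ∂μ := by
  induction k generalizing E hE with
  | zero =>
      rw [Function.iterate_one, ← MeasureTheory.setLIntegral_one (⇑f.symm '' E),
        cov_image_symm f φ hφ μ hJ (fun _ => (1 : ENNReal)) measurable_one hE]
      simp only [one_mul, cocycle_negSucc_def]
      congr 1
      funext x
      congr 2
      simp
  | succ k ih =>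
      have hE' : MeasurableSet (⇑f.symm '' E) := symm_iter_image_meas f 1 hE
      rw [Function.iterate_succ, Set.image_comp, ih hE',
        cov_image_symm f φ hφ μ hJ
          (fun x => ENNReal.ofReal (Real.exp (cocycle f φ (Int.negSucc k) x)))
          ((Real.measurable_exp.comp (cocycle_measurable f φ hφ _)).ennreal_ofReal) hE]
      congr 1
      funext x
      rw [← ENNReal.ofReal_mul (Real.exp_nonneg _), ← Real.exp_add]
      congr 2
      simp only [cocycle_negSucc_def]
      rw [Finset.sum_range_succ' (fun i => φ ((⇑f.symm)^[i + 1] x)) (k + 1)]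
      have hit : ∀ i : ℕ, (⇑f.symm)^[i + 1] ((⇑f.symm) x) = (⇑f.symm)^[i + 1 + 1] x :=
        fun i => (Function.iterate_succ_apply _ _ _).symm
      simp only [hit, neg_add, zero_add, Function.iterate_one]

lemma jac_zpow (n : ℤ) {E : Set X} (hE : MeasurableSet E) :
    μ (zpowIter f n '' E) =
      ∫⁻ x in E, ENNReal.ofReal (Real.exp (cocycle f φ n x)) ∂μ := by
  cases n with
  | ofNat k => rw [zpowIter_ofNat]; exact jac_pos f φ hφ μ hJ k hE
  | negSucc k => rw [zpowIter_negSucc]; exact jac_neg f φ hφ μ hJ k hE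

end Aux
/-- if μ has Jacobian e^φ with respect to f, then for any wandering
    measurable set W, ∫_W Σ_{n∈ℤ} e^{φ_n(x)} dμ(x) = μ(⋃_n f^n W) ≤ 1, and in particular
    Σ_{n∈ℤ} e^{φ_n(x)} < ∞ for μ-a.e. x ∈ W. -/
theorem jacobian_wandering_sum [CompactSpace X] [MeasurableSpace X] [BorelSpace X]
    (f : X ≃ₜ X) (φ : X → ℝ) (hφ : Continuous φ)
    (μ : Measure X) [IsProbabilityMeasure μ]
    (hJ : ∀ E : Set X, MeasurableSet E →
      μ (⇑f '' E) = ∫⁻ x in E, ENNReal.ofReal (Real.exp (φ x)) ∂μ)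
    (W : Set X) (hW : MeasurableSet W)
    (hwand : ∀ m n : ℤ, m ≠ n → Disjoint (zpowIter f m '' W) (zpowIter f n '' W)) :
    (∫⁻ x in W, ∑' n : ℤ, ENNReal.ofReal (Real.exp (cocycle f φ n x)) ∂μ) =
        μ (⋃ n : ℤ, zpowIter f n '' W) ∧
      μ (⋃ n : ℤ, zpowIter f n '' W) ≤ 1 ∧
      ∀ᵐ x ∂μ.restrict W, (∑' n : ℤ, ENNReal.ofReal (Real.exp (cocycle f φ n x))) < ⊤ := by
  have hFm : ∀ n : ℤ,
      Measurable (fun x => ENNReal.ofReal (Real.exp (cocycle f φ n x))) := fun n =>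
    (Real.measurable_exp.comp (cocycle_measurable f φ hφ n)).ennreal_ofReal
  have hmeasIm : ∀ n : ℤ, MeasurableSet (zpowIter f n '' W) := by
    intro n
    cases n with
    | ofNat k => rw [zpowIter_ofNat]; exact iter_image_meas f k hW
    | negSucc k => rw [zpowIter_negSucc]; exact symm_iter_image_meas f (k + 1) hW
  have h1 : (∫⁻ x in W, ∑' n : ℤ, ENNReal.ofReal (Real.exp (cocycle f φ n x)) ∂μ) =
      ∑' n : ℤ, ∫⁻ x in W, ENNReal.ofReal (Real.exp (cocycle f φ n x)) ∂μ :=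
    lintegral_tsum fun n => (hFm n).aemeasurable
  have h2 : ∀ n : ℤ, (∫⁻ x in W, ENNReal.ofReal (Real.exp (cocycle f φ n x)) ∂μ)
      = μ (zpowIter f n '' W) := fun n => (jac_zpow f φ hφ μ hJ n hW).symm
  have h3 : μ (⋃ n : ℤ, zpowIter f n '' W) = ∑' n : ℤ, μ (zpowIter f n '' W) :=
    measure_iUnion (fun m n h => hwand m n h) hmeasIm
  have hmain : (∫⁻ x in W, ∑' n : ℤ, ENNReal.ofReal (Real.exp (cocycle f φ n x)) ∂μ) =
      μ (⋃ n : ℤ, zpowIter f n '' W) := by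
    rw [h1, h3]
    exact tsum_congr h2
  refine ⟨hmain, prob_le_one, ?_⟩
  have hne : (∫⁻ x in W, ∑' n : ℤ, ENNReal.ofReal (Real.exp (cocycle f φ n x)) ∂μ) ≠ ⊤ := by
    rw [hmain]
    exact (lt_of_le_of_lt prob_le_one ENNReal.one_lt_top).ne
  exact ae_lt_top (Measurable.ennreal_tsum fun n => hFm n) hne
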